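/- Let G be a connected (2K2, K5 − e)-free graph. Then either G is (2K2, diamond)-free, or there exists a partition (V1, V2, V3, V4, V5) of the vertex set of G such that V1 induces a (2K2, diamond)-free subgraph of G with ω([V1]) ≤ ω(G) − 1, and V2, V3, V4, V5 are independent sets. -/

import Mathlib

open SimpleGraph

/-- `G` contains no induced subgraph isomorphic to `H` (graph embeddings are
exactly the inclusions of induced subgraphs). -/
def IndFree {W V : Type*} (H : SimpleGraph W) (G : SimpleGraph V) : Prop :=
  IsEmpty (H ↪g G)

/-- A set of vertices is independent if its elements are pairwise nonadjacent. -/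
def IsIndep {V : Type*} (G : SimpleGraph V) (s : Set V) : Prop :=
  s.Pairwise fun u v => ¬ G.Adj u v

/-- A graph is perfect if every induced subgraph has chromatic number equal to
its clique number. -/
def IsPerfect {V : Type*} (G : SimpleGraph V) : Prop :=
  ∀ S : Set V, (G.induce S).chromaticNumber = ((G.induce S).cliqueNum : ℕ∞)

/-- `2K₂`: two disjoint edges `{0,1}` and `{2,3}`. -/
def graph2K2 : SimpleGraph (Fin 4) :=
  SimpleGraph.fromRel (fun a b => (a = 0 ∧ b = 1) ∨ (a = 2 ∧ b = 3))

/-- The path `P₄`. -/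
def graphP4 : SimpleGraph (Fin 4) :=
  SimpleGraph.fromRel (fun a b => (a = 0 ∧ b = 1) ∨ (a = 1 ∧ b = 2) ∨ (a = 2 ∧ b = 3))

/-- The path `P₃`. -/
def graphP3 : SimpleGraph (Fin 3) :=
  SimpleGraph.fromRel (fun a b => (a = 0 ∧ b = 1) ∨ (a = 1 ∧ b = 2))

/-- `P₄ ∪ K₁`: a path on `{0,1,2,3}` plus the isolated vertex `4`. -/
def graphP4K1 : SimpleGraph (Fin 5) :=
  SimpleGraph.fromRel (fun a b => (a = 0 ∧ b = 1) ∨ (a = 1 ∧ b = 2) ∨ (a = 2 ∧ b = 3))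

/-- The cycle `C₄`. -/
def graphC4 : SimpleGraph (Fin 4) :=
  SimpleGraph.fromRel
    (fun a b => (a = 0 ∧ b = 1) ∨ (a = 1 ∧ b = 2) ∨ (a = 2 ∧ b = 3) ∨ (a = 3 ∧ b = 0))

/-- The gem `K₁ + P₄`: a path on `{0,1,2,3}` plus the universal vertex `4`. -/
def graphGem : SimpleGraph (Fin 5) :=
  SimpleGraph.fromRel
    (fun a b => (a = 0 ∧ b = 1) ∨ (a = 1 ∧ b = 2) ∨ (a = 2 ∧ b = 3) ∨ (a ≠ 4 ∧ b = 4))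

/-- The wheel `K₁ + C₄`: a 4-cycle on `{0,1,2,3}` plus the universal vertex `4`. -/
def graphWheel : SimpleGraph (Fin 5) :=
  SimpleGraph.fromRel
    (fun a b => (a = 0 ∧ b = 1) ∨ (a = 1 ∧ b = 2) ∨ (a = 2 ∧ b = 3) ∨ (a = 3 ∧ b = 0) ∨
      (a ≠ 4 ∧ b = 4))

/-- `P₂ ∪ P₃`: the edge `{0,1}` together with the path `2 - 3 - 4`. -/
def graphP2P3 : SimpleGraph (Fin 5) :=
  SimpleGraph.fromRel (fun a b => (a = 0 ∧ b = 1) ∨ (a = 2 ∧ b = 3) ∨ (a = 3 ∧ b = 4))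

/-- `P₂ ∪ P₄`: the edge `{0,1}` together with the path `2 - 3 - 4 - 5`. -/
def graphP2P4 : SimpleGraph (Fin 6) :=
  SimpleGraph.fromRel
    (fun a b => (a = 0 ∧ b = 1) ∨ (a = 2 ∧ b = 3) ∨ (a = 3 ∧ b = 4) ∨ (a = 4 ∧ b = 5))

/-- `HVN`: `K₄` on `{0,1,2,3}` plus a vertex `4` adjacent to exactly `0` and `1`. -/
def graphHVN : SimpleGraph (Fin 5) :=
  SimpleGraph.fromRel (fun a b => (a < 4 ∧ b < 4) ∨ (a = 4 ∧ (b = 0 ∨ b = 1)))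

/-- `K₅ - e`: the complete graph on 5 vertices minus the edge `{0,1}`. -/
def graphK5e : SimpleGraph (Fin 5) :=
  SimpleGraph.fromRel (fun a b => ¬((a = 0 ∧ b = 1) ∨ (a = 1 ∧ b = 0)))

/-- The diamond `K₄ - e`: the complete graph on 4 vertices minus the edge `{0,2}`. -/
def graphDiamond : SimpleGraph (Fin 4) :=
  SimpleGraph.fromRel (fun a b => ¬((a = 0 ∧ b = 2) ∨ (a = 2 ∧ b = 0)))

/-- The paw: a triangle `{0,1,2}` plus a pendant vertex `3` adjacent to `0`. -/
def graphPaw : SimpleGraph (Fin 4) :=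
  SimpleGraph.fromRel
    (fun a b => (a = 0 ∧ b = 1) ∨ (a = 1 ∧ b = 2) ∨ (a = 0 ∧ b = 2) ∨ (a = 0 ∧ b = 3))

/-- `K₅`. -/
def graphK5 : SimpleGraph (Fin 5) := ⊤

/-- The join `K₁ + H`: `H` together with a new universal vertex `none`. -/
def joinK1 {W : Type*} (H : SimpleGraph W) : SimpleGraph (Option W) :=
  SimpleGraph.fromRel
    (fun a b => (∃ u v, a = some u ∧ b = some v ∧ H.Adj u v) ∨ a = none)

/-- A pseudo-split graph is a `(2K₂, C₄)`-free graph. -/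
def IsPseudoSplit {V : Type*} (G : SimpleGraph V) : Prop :=
  IndFree graph2K2 G ∧ IndFree graphC4 G

/-!
A diamond contains a triangle, so we may assume `ω ≥ 3`. Two facts carry the proof: in a
`2K₂`-free graph the common non-neighbours of an edge are independent, and in a `(K₅ - e)`-free
graph a vertex outside a maximum clique `Q` that sees three vertices of `Q` sees all of it, which
is impossible, so it has at most two neighbours in `Q`. It suffices to cover the vertex set by
sets `V₁, …, V₅` as required; removing from each the earlier ones gives a partition.

* `ω = 3`, triangle `abc`: `V₁` = common non-neighbours of `ab` or of `ac`, a union of two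
  independent sets and hence triangle-free; `V₂` = common non-neighbours of `bc`; `V₃, V₄, V₅` =
  common neighbours of `bc, ac, ab`, independent because `ω = 3`.
* `ω = 4`, clique `abcd`: every other vertex misses two of `a, b, c, d`. `V₁` takes the common
  non-neighbours of `ab` or of `cd`; each of the four remaining pairs `xy` gives the independent
  set `{x} ∪` (common non-neighbours of `xy`).
* `ω ≥ 5`, maximum clique `Q ∋ q`: `V₁ = Q - q`, `V₂ = {q}`. Two adjacent vertices outside `Q`
  together see all but at most one vertex of `Q`, so three pairwise adjacent ones cannot exist
  when `|Q| ≥ 5`. Hence `V - Q` is `(2K₂, K₃)`-free, and it is covered by `N(a)`, `N(b)` and the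
  common non-neighbours of any edge `ab`.
-/

theorem IndFree.induce {W V : Type*} {H : SimpleGraph W} {G : SimpleGraph V}
    (h : IndFree H G) (s : Set V) : IndFree H (G.induce s) :=
  ⟨fun e => h.false (e.trans (SimpleGraph.Embedding.induce s))⟩

theorem IsIndep.mono {V : Type*} {G : SimpleGraph V} {s t : Set V} (h : IsIndep G t)
    (hst : s ⊆ t) : IsIndep G s :=
  Set.Pairwise.mono hst h

theorem IsIndep.subsingleton_inter {V : Type*} {G : SimpleGraph V} {s t : Set V}
    (hs : IsIndep G s) (ht : G.IsClique t) : (s ∩ t).Subsingleton := by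
  intro u hu v hv
  by_contra huv
  exact hs hu.1 hv.1 huv (ht hu.2 hv.2 huv)

-- `|A ∪ B| ≥ |Q| - 1 ≥ 4` would force `A, B` (and likewise each pair) to be disjoint
-- 2-sets, and then `|A ∪ B ∪ C| = 6 > |Q| = 5`.
theorem Finset.card_le_four_of_almost_covering_pairs {α : Type*} [DecidableEq α]
    {Q A B C : Finset α} (hA : A ⊆ Q) (hB : B ⊆ Q) (hC : C ⊆ Q)
    (hA2 : A.card ≤ 2) (hB2 : B.card ≤ 2) (hC2 : C.card ≤ 2)
    (hAB : Q.card ≤ (A ∪ B).card + 1) (hAC : Q.card ≤ (A ∪ C).card + 1)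
    (hBC : Q.card ≤ (B ∪ C).card + 1) : Q.card ≤ 4 := by
  have := Finset.card_union_add_card_inter A B
  have := Finset.card_union_add_card_inter A C
  have := Finset.card_union_add_card_inter B C
  have := Finset.card_union_add_card_inter (A ∪ B) C
  have := Finset.card_le_card (Finset.union_subset (Finset.union_subset hA hB) hC)
  have := Finset.card_union_le (A ∩ C) (B ∩ C)
  rw [← Finset.union_inter_distrib_right] at this
  omega

namespace SimpleGraph

variable {V : Type*} {G : SimpleGraph V}

theorem not_indFree_of_adj_iff {W : Type*} {H : SimpleGraph W} (f : W → V)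
    (hf : Function.Injective f) (hadj : ∀ i j, G.Adj (f i) (f j) ↔ H.Adj i j) :
    ¬IndFree H G :=
  fun h => h.false ⟨⟨f, hf⟩, hadj _ _⟩

theorem not_indFree_graph2K2 {a b c d : V} (hab : G.Adj a b) (hcd : G.Adj c d)
    (hac : ¬G.Adj a c) (had : ¬G.Adj a d) (hbc : ¬G.Adj b c) (hbd : ¬G.Adj b d) :
    ¬IndFree graph2K2 G := by
  have hca := mt Adj.symm hac
  have hda := mt Adj.symm had
  have hcb := mt Adj.symm hbc
  have hdb := mt Adj.symm hbd
  have hac' : a ≠ c := by rintro rfl; exact had hcd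
  have had' : a ≠ d := by rintro rfl; exact hac hcd.symm
  have hbc' : b ≠ c := by rintro rfl; exact hbd hcd
  have hbd' : b ≠ d := by rintro rfl; exact hbc hcd.symm
  refine not_indFree_of_adj_iff ![a, b, c, d] ?_ ?_ <;> intro i j <;>
    fin_cases i <;> fin_cases j <;>
    simp [graph2K2, hab.symm, hcd.symm, hab.ne, hcd.ne, hab.ne.symm, hcd.ne.symm, Ne.symm, *]

theorem not_indFree_graphK5e {v s p q r : V}
    (hpq : G.Adj p q) (hpr : G.Adj p r) (hps : G.Adj p s)
    (hqr : G.Adj q r) (hqs : G.Adj q s) (hrs : G.Adj r s)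
    (hvp : G.Adj v p) (hvq : G.Adj v q) (hvr : G.Adj v r)
    (hvs : ¬G.Adj v s) (hvs' : v ≠ s) : ¬IndFree graphK5e G := by
  have hsv := mt Adj.symm hvs
  refine not_indFree_of_adj_iff ![v, s, p, q, r] ?_ ?_ <;> intro i j <;>
    fin_cases i <;> fin_cases j <;>
    simp [graphK5e, hpq.symm, hpr.symm, hps.symm, hqr.symm, hqs.symm, hrs.symm, hvp.symm,
      hvq.symm, hvr.symm, hpq.ne, hpr.ne, hps.ne, hqr.ne, hqs.ne, hrs.ne, hvp.ne, hvq.ne, hvr.ne,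
      hpq.ne.symm, hpr.ne.symm, hps.ne.symm, hqr.ne.symm, hqs.ne.symm, hrs.ne.symm, hvp.ne.symm,
      hvq.ne.symm, hvr.ne.symm, hvs'.symm, *]

theorem indFree_graphDiamond_of_cliqueFree_three (h : G.CliqueFree 3) :
    IndFree graphDiamond G := by
  refine ⟨fun e => h.comap ⟨e.toCopy⟩ {0, 1, 3} (is3Clique_triple_iff.2 ?_)⟩
  simp [graphDiamond]

theorem indFree_graphDiamond_induce_of_isClique {s : Set V} (hs : G.IsClique s) :
    IndFree graphDiamond (G.induce s) := by
  rw [induce_eq_top.2 hs]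
  refine ⟨fun e => ?_⟩
  have h02 := e.map_adj_iff.1 (e.injective.ne (by decide) : (⊤ : SimpleGraph s).Adj (e 0) (e 2))
  simp [graphDiamond] at h02

theorem le_cliqueNum_of_not_cliqueFree [Finite V] {n : ℕ} (h : ¬G.CliqueFree n) :
    n ≤ G.cliqueNum := by
  obtain ⟨s, hs⟩ := not_forall_not.1 h
  exact hs.card_eq ▸ hs.isClique.card_le_cliqueNum

theorem cliqueNum_le_of_cliqueFree {n : ℕ} (h : G.CliqueFree (n + 1)) : G.cliqueNum ≤ n := by
  obtain ⟨s, hs⟩ := G.exists_isNClique_cliqueNum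
  by_contra! hn
  exact h.mono hn s hs

theorem cliqueFree_of_cliqueNum_lt [Finite V] {n : ℕ} (h : G.cliqueNum < n) :
    G.CliqueFree n :=
  fun _ hs => h.not_ge (hs.card_eq ▸ hs.isClique.card_le_cliqueNum)

theorem cliqueNum_induce_le_card (s : Finset V) : (G.induce s).cliqueNum ≤ s.card := by
  obtain ⟨t, ht⟩ := (G.induce s).exists_isNClique_cliqueNum
  simpa [ht.card_eq] using t.card_le_univ

theorem is4Clique_iff [DecidableEq V] {s : Finset V} :
    G.IsNClique 4 s ↔ ∃ a b c d, G.Adj a b ∧ G.Adj a c ∧ G.Adj a d ∧ G.Adj b c ∧ G.Adj b d ∧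
      G.Adj c d ∧ s = {a, b, c, d} := by
  refine ⟨fun hs => ?_, ?_⟩
  · obtain ⟨a, ha⟩ : s.Nonempty := Finset.card_pos.1 (by rw [hs.card_eq]; norm_num)
    obtain ⟨b, c, d, hbc, hbd, hcd, hs'⟩ := is3Clique_iff.1 (hs.erase_of_mem ha)
    have adj : ∀ x ∈ s.erase a, G.Adj a x := fun x hx =>
      hs.isClique ha (Finset.mem_of_mem_erase hx) (Finset.ne_of_mem_erase hx).symm
    refine ⟨a, b, c, d, adj b (by simp [hs']), adj c (by simp [hs']), adj d (by simp [hs']),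
      hbc, hbd, hcd, ?_⟩
    rw [← Finset.insert_erase ha, hs']
  · rintro ⟨a, b, c, d, hab, hac, had, hbc, hbd, hcd, rfl⟩
    exact (is3Clique_triple_iff.2 ⟨hbc, hbd, hcd⟩).insert (by simp [hab, hac, had])

theorem cliqueFree_three_induce_iff {s : Set V} :
    (G.induce s).CliqueFree 3 ↔
      ∀ u ∈ s, ∀ v ∈ s, ∀ w ∈ s, G.Adj u v → G.Adj u w → G.Adj v w → False := by
  classical
  refine ⟨fun h u hu v hv w hw huv huw hvw => ?_, fun h t ht => ?_⟩
  · have : (G.induce s).IsNClique 3 {⟨u, hu⟩, ⟨v, hv⟩, ⟨w, hw⟩} :=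
      is3Clique_triple_iff.2 ⟨huv, huw, hvw⟩
    exact h _ this
  · obtain ⟨u, v, w, huv, huw, hvw, -⟩ := is3Clique_iff.1 ht
    exact h u u.2 v v.2 w w.2 huv huw hvw

theorem isIndep_compl_neighborSet_union (h1 : IndFree graph2K2 G) {x y : V}
    (hxy : G.Adj x y) : IsIndep G (G.neighborSet x ∪ G.neighborSet y)ᶜ := by
  intro u hu v hv _ huv
  simp only [Set.mem_compl_iff, Set.mem_union, mem_neighborSet, not_or] at hu hv
  exact not_indFree_graph2K2 hxy huv hu.1 hv.1 hu.2 hv.2 h1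

theorem isIndep_insert_compl_neighborSet_union (h1 : IndFree graph2K2 G) {x y : V}
    (hxy : G.Adj x y) : IsIndep G (insert x (G.neighborSet x ∪ G.neighborSet y)ᶜ) := by
  refine Set.pairwise_insert.2 ⟨isIndep_compl_neighborSet_union h1 hxy, fun v hv _ => ?_⟩
  simp_all [adj_comm]

theorem isIndep_commonNeighbors (h : G.CliqueFree 4) {x y : V} (hxy : G.Adj x y) :
    IsIndep G (G.commonNeighbors x y) := by
  classical
  intro u hu v hv _ huv
  rw [mem_commonNeighbors] at hu hv
  exact h _ ((is3Clique_triple_iff.2 ⟨hxy, hv.1, hv.2⟩).insert (a := u)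
    (by simp [hu.1.symm, hu.2.symm, huv]))

theorem isIndep_neighborSet_inter {s : Set V} (hs : (G.induce s).CliqueFree 3) {x : V}
    (hx : x ∈ s) : IsIndep G (G.neighborSet x ∩ s) :=
  fun u hu v hv _ huv => cliqueFree_three_induce_iff.1 hs x hx u hu.2 v hv.2 hu.1 hv.1 huv

theorem cliqueFree_three_induce_union {A B : Set V} (hA : IsIndep G A) (hB : IsIndep G B) :
    (G.induce (A ∪ B)).CliqueFree 3 := by
  classical
  refine Colorable.cliqueFree ⟨Coloring.mk (fun v => if (v : V) ∈ A then (0 : Fin 2) else 1)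
    fun {u v} huv => ?_⟩ (by norm_num)
  have hu := u.2
  have hv := v.2
  split_ifs with hu' hv' hv'
  · exact absurd huv (hA hu' hv' (fun h => huv.ne (Subtype.ext h)))
  · simp
  · simp
  · exact absurd huv (hB (hu.resolve_left hu') (hv.resolve_left hv')
      (fun h => huv.ne (Subtype.ext h)))

theorem exists_isIndep_cover_of_cliqueFree_three (h1 : IndFree graph2K2 G) {s : Set V}
    (hs : (G.induce s).CliqueFree 3) :
    ∃ A B C : Set V, IsIndep G A ∧ IsIndep G B ∧ IsIndep G C ∧ s ⊆ A ∪ B ∪ C := by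
  by_cases hE : ∃ a ∈ s, ∃ b ∈ s, G.Adj a b
  · obtain ⟨a, ha, b, hb, hab⟩ := hE
    refine ⟨_, _, _, isIndep_neighborSet_inter hs ha, isIndep_neighborSet_inter hs hb,
      isIndep_compl_neighborSet_union h1 hab, fun v hv => ?_⟩
    simp only [Set.mem_union, Set.mem_inter_iff, Set.mem_compl_iff, mem_neighborSet]
    tauto
  · exact ⟨s, ∅, ∅, fun u hu v hv _ huv => hE ⟨u, hu, v, hv, huv⟩, Set.pairwise_empty _,
      Set.pairwise_empty _, Set.subset_union_left.trans Set.subset_union_left⟩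

theorem IsNClique.mem_of_adj_of_adj_of_adj [Finite V] (h2 : IndFree graphK5e G) {Q : Finset V}
    (hQ : G.IsNClique G.cliqueNum Q) {p q r v : V}
    (hp : p ∈ Q) (hq : q ∈ Q) (hr : r ∈ Q) (hpq : p ≠ q) (hpr : p ≠ r) (hqr : q ≠ r)
    (hvp : G.Adj v p) (hvq : G.Adj v q) (hvr : G.Adj v r) : v ∈ Q := by
  classical
  by_contra hv
  have hQv : ∀ s ∈ Q, G.Adj v s := by
    intro s hs
    by_contra hvs
    have adj {x y : V} (hx : x ∈ Q) (hy : y ∈ Q) (hxy : x ≠ y) : G.Adj x y :=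
      hQ.isClique hx hy hxy
    have hps : p ≠ s := by rintro rfl; exact hvs hvp
    have hqs : q ≠ s := by rintro rfl; exact hvs hvq
    have hrs : r ≠ s := by rintro rfl; exact hvs hvr
    exact not_indFree_graphK5e (adj hp hq hpq) (adj hp hr hpr) (adj hp hs hps) (adj hq hr hqr)
      (adj hq hs hqs) (adj hr hs hrs) hvp hvq hvr hvs (by rintro rfl; exact hv hs) h2
  have := (hQ.insert hQv).isClique.card_le_cliqueNum
  rw [(hQ.insert hQv).card_eq] at this
  omega

theorem IsNClique.card_filter_adj_le_two [Finite V] [DecidableRel G.Adj]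
    (h2 : IndFree graphK5e G) {Q : Finset V} (hQ : G.IsNClique G.cliqueNum Q) {v : V}
    (hv : v ∉ Q) : (Q.filter (G.Adj v)).card ≤ 2 := by
  by_contra! h
  obtain ⟨p, hp, q, hq, r, hr, hpq, hpr, hqr⟩ := Finset.two_lt_card.1 h
  simp only [Finset.mem_filter] at hp hq hr
  exact hv (hQ.mem_of_adj_of_adj_of_adj h2 hp.1 hq.1 hr.1 hpq hpr hqr hp.2 hq.2 hr.2)

theorem card_le_card_filter_adj_union_add_one [DecidableEq V] [DecidableRel G.Adj]
    (h1 : IndFree graph2K2 G) {Q : Finset V} (hQ : G.IsClique (Q : Set V)) {a b : V}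
    (hab : G.Adj a b) :
    Q.card ≤ (Q.filter (G.Adj a) ∪ Q.filter (G.Adj b)).card + 1 := by
  have hsub : ((Q \ (Q.filter (G.Adj a) ∪ Q.filter (G.Adj b)) : Finset V) : Set V) ⊆
      (G.neighborSet a ∪ G.neighborSet b)ᶜ ∩ Q := fun v hv => by
    simp only [Finset.mem_coe, Finset.mem_sdiff, Finset.mem_union, Finset.mem_filter] at hv
    simp only [Set.mem_inter_iff, Set.mem_compl_iff, Set.mem_union, mem_neighborSet,
      Finset.mem_coe]
    tauto
  have hmiss : (Q \ (Q.filter (G.Adj a) ∪ Q.filter (G.Adj b))).card ≤ 1 :=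
    Finset.card_le_one.2 fun x hx y hy =>
      (isIndep_compl_neighborSet_union h1 hab).subsingleton_inter hQ (hsub hx) (hsub hy)
  have := Finset.card_le_card_sdiff_add_card (s := Q)
    (t := Q.filter (G.Adj a) ∪ Q.filter (G.Adj b))
  omega

theorem cliqueFree_three_induce_compl [Finite V] (h1 : IndFree graph2K2 G)
    (h2 : IndFree graphK5e G) {Q : Finset V} (hQ : G.IsNClique G.cliqueNum Q)
    (hω : 5 ≤ G.cliqueNum) : (G.induce (Q : Set V)ᶜ).CliqueFree 3 := by
  classical
  refine cliqueFree_three_induce_iff.2 fun u hu v hv w hw huv huw hvw => ?_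
  have := Finset.card_le_four_of_almost_covering_pairs (Finset.filter_subset _ Q)
    (Finset.filter_subset _ Q) (Finset.filter_subset _ Q)
    (hQ.card_filter_adj_le_two h2 hu) (hQ.card_filter_adj_le_two h2 hv)
    (hQ.card_filter_adj_le_two h2 hw)
    (card_le_card_filter_adj_union_add_one h1 hQ.isClique huv)
    (card_le_card_filter_adj_union_add_one h1 hQ.isClique huw)
    (card_le_card_filter_adj_union_add_one h1 hQ.isClique hvw)
  rw [hQ.card_eq] at this
  omega

def HasCliqueReducingCover (G : SimpleGraph V) : Prop :=
  ∃ V1 V2 V3 V4 V5 : Set V,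
    V1 ∪ V2 ∪ V3 ∪ V4 ∪ V5 = Set.univ ∧
    IndFree graph2K2 (G.induce V1) ∧ IndFree graphDiamond (G.induce V1) ∧
    (G.induce V1).cliqueNum ≤ G.cliqueNum - 1 ∧
    IsIndep G V2 ∧ IsIndep G V3 ∧ IsIndep G V4 ∧ IsIndep G V5

theorem HasCliqueReducingCover.exists_partition (h : G.HasCliqueReducingCover) :
    ∃ V1 V2 V3 V4 V5 : Set V,
      V1 ∪ V2 ∪ V3 ∪ V4 ∪ V5 = (Set.univ : Set V) ∧
      List.Pairwise Disjoint [V1, V2, V3, V4, V5] ∧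
      IndFree graph2K2 (G.induce V1) ∧ IndFree graphDiamond (G.induce V1) ∧
      (G.induce V1).cliqueNum ≤ G.cliqueNum - 1 ∧
      IsIndep G V2 ∧ IsIndep G V3 ∧ IsIndep G V4 ∧ IsIndep G V5 := by
  obtain ⟨V1, V2, V3, V4, V5, hcov, hV1, hV1', hω, h2, h3, h4, h5⟩ := h
  refine ⟨V1, V2 \ V1, V3 \ (V1 ∪ V2), V4 \ (V1 ∪ V2 ∪ V3), V5 \ (V1 ∪ V2 ∪ V3 ∪ V4), ?_, ?_,
    hV1, hV1', hω, h2.mono Set.sdiff_subset, h3.mono Set.sdiff_subset, h4.mono Set.sdiff_subset,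
    h5.mono Set.sdiff_subset⟩
  · rw [← hcov]
    ext v
    simp only [Set.mem_union, Set.mem_sdiff]
    tauto
  · simp only [List.pairwise_cons, List.mem_cons, List.not_mem_nil, or_false, forall_eq_or_imp,
      forall_eq, List.Pairwise.nil, Set.disjoint_left, Set.mem_sdiff, Set.mem_union]
    tauto

theorem hasCliqueReducingCover_of_cliqueNum_eq_three [Finite V] (h1 : IndFree graph2K2 G)
    (hω : G.cliqueNum = 3) : G.HasCliqueReducingCover := by
  classical
  obtain ⟨Q, hQ⟩ := G.exists_isNClique_cliqueNum
  obtain ⟨a, b, c, hab, hac, hbc, -⟩ := is3Clique_iff.1 (hω ▸ hQ)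
  have h4 : G.CliqueFree 4 := cliqueFree_of_cliqueNum_lt (by omega)
  have hV1 := cliqueFree_three_induce_union (isIndep_compl_neighborSet_union h1 hab)
    (isIndep_compl_neighborSet_union h1 hac)
  refine ⟨(G.neighborSet a ∪ G.neighborSet b)ᶜ ∪ (G.neighborSet a ∪ G.neighborSet c)ᶜ,
    (G.neighborSet b ∪ G.neighborSet c)ᶜ, G.commonNeighbors b c, G.commonNeighbors a c,
    G.commonNeighbors a b, Set.eq_univ_of_forall fun v => ?_, h1.induce _,
    indFree_graphDiamond_of_cliqueFree_three hV1, by have := cliqueNum_le_of_cliqueFree hV1; omega,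
    isIndep_compl_neighborSet_union h1 hbc, isIndep_commonNeighbors h4 hbc,
    isIndep_commonNeighbors h4 hac, isIndep_commonNeighbors h4 hab⟩
  simp only [Set.mem_union, Set.mem_compl_iff, mem_neighborSet, mem_commonNeighbors]
  tauto

theorem hasCliqueReducingCover_of_cliqueNum_eq_four [Finite V] (h1 : IndFree graph2K2 G)
    (h2 : IndFree graphK5e G) (hω : G.cliqueNum = 4) : G.HasCliqueReducingCover := by
  classical
  obtain ⟨Q, hQ⟩ := G.exists_isNClique_cliqueNum
  obtain ⟨a, b, c, d, hab, hac, had, hbc, hbd, hcd, rfl⟩ := is4Clique_iff.1 (hω ▸ hQ)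
  have hV1 := cliqueFree_three_induce_union (isIndep_compl_neighborSet_union h1 hab)
    (isIndep_compl_neighborSet_union h1 hcd)
  refine ⟨(G.neighborSet a ∪ G.neighborSet b)ᶜ ∪ (G.neighborSet c ∪ G.neighborSet d)ᶜ,
    insert a (G.neighborSet a ∪ G.neighborSet c)ᶜ, insert b (G.neighborSet b ∪ G.neighborSet d)ᶜ,
    insert c (G.neighborSet c ∪ G.neighborSet b)ᶜ, insert d (G.neighborSet d ∪ G.neighborSet a)ᶜ,
    Set.eq_univ_of_forall fun v => ?_, h1.induce _, indFree_graphDiamond_of_cliqueFree_three hV1,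
    by have := cliqueNum_le_of_cliqueFree hV1; omega,
    isIndep_insert_compl_neighborSet_union h1 hac, isIndep_insert_compl_neighborSet_union h1 hbd,
    isIndep_insert_compl_neighborSet_union h1 hbc.symm,
    isIndep_insert_compl_neighborSet_union h1 had.symm⟩
  simp only [Set.mem_union, Set.mem_insert_iff, Set.mem_compl_iff, mem_neighborSet,
    G.adj_comm _ v]
  by_cases hv : v ∈ ({a, b, c, d} : Finset V)
  · simp only [Finset.mem_insert, Finset.mem_singleton] at hv
    rcases hv with rfl | rfl | rfl | rfl <;> simp
  have h3 {p q r : V} (hp : p ∈ ({a, b, c, d} : Finset V)) (hq : q ∈ ({a, b, c, d} : Finset V))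
      (hr : r ∈ ({a, b, c, d} : Finset V)) (hpq : p ≠ q) (hpr : p ≠ r) (hqr : q ≠ r) :
      ¬(G.Adj v p ∧ G.Adj v q ∧ G.Adj v r) := fun ⟨hvp, hvq, hvr⟩ =>
    hv (hQ.mem_of_adj_of_adj_of_adj h2 hp hq hr hpq hpr hqr hvp hvq hvr)
  have := h3 (by simp) (by simp) (by simp) hab.ne hac.ne hbc.ne
  have := h3 (by simp) (by simp) (by simp) hab.ne had.ne hbd.ne
  have := h3 (by simp) (by simp) (by simp) hac.ne had.ne hcd.ne
  have := h3 (by simp) (by simp) (by simp) hbc.ne hbd.ne hcd.ne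
  by_cases G.Adj v a <;> by_cases G.Adj v b <;> by_cases G.Adj v c <;> by_cases G.Adj v d <;>
    simp_all

theorem hasCliqueReducingCover_of_five_le_cliqueNum [Finite V] (h1 : IndFree graph2K2 G)
    (h2 : IndFree graphK5e G) (hω : 5 ≤ G.cliqueNum) : G.HasCliqueReducingCover := by
  classical
  obtain ⟨Q, hQ⟩ := G.exists_isNClique_cliqueNum
  obtain ⟨q, hq⟩ : Q.Nonempty := Finset.card_pos.1 (by rw [hQ.card_eq]; omega)
  obtain ⟨A, B, C, hA, hB, hC, hcov⟩ :=
    exists_isIndep_cover_of_cliqueFree_three h1 (cliqueFree_three_induce_compl h1 h2 hQ hω)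
  refine ⟨Q.erase q, {q}, A, B, C, Set.eq_univ_of_forall fun v => ?_, h1.induce _,
    indFree_graphDiamond_induce_of_isClique (hQ.erase_of_mem hq).isClique, ?_,
    Set.pairwise_singleton _ _, hA, hB, hC⟩
  · by_cases hv : v ∈ Q
    · by_cases hvq : v = q <;> simp [hv, hvq]
    · have := hcov hv
      simp only [Set.mem_union] at this ⊢
      tauto
  · calc (G.induce (Q.erase q : Set V)).cliqueNum ≤ (Q.erase q).card := cliqueNum_induce_le_card _
      _ = G.cliqueNum - 1 := by rw [Finset.card_erase_of_mem hq, hQ.card_eq]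

end SimpleGraph

theorem stmt8_general {V : Type*} [Fintype V] (G : SimpleGraph V)
    (h1 : IndFree graph2K2 G) (h2 : IndFree graphK5e G) :
    (IndFree graph2K2 G ∧ IndFree graphDiamond G) ∨
      ∃ V1 V2 V3 V4 V5 : Set V,
        V1 ∪ V2 ∪ V3 ∪ V4 ∪ V5 = (Set.univ : Set V) ∧
        List.Pairwise Disjoint [V1, V2, V3, V4, V5] ∧
        IndFree graph2K2 (G.induce V1) ∧ IndFree graphDiamond (G.induce V1) ∧
        (G.induce V1).cliqueNum ≤ G.cliqueNum - 1 ∧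
        IsIndep G V2 ∧ IsIndep G V3 ∧ IsIndep G V4 ∧ IsIndep G V5 := by
  by_cases hd : IndFree graphDiamond G
  · exact .inl ⟨h1, hd⟩
  refine .inr (HasCliqueReducingCover.exists_partition ?_)
  have hω : 3 ≤ G.cliqueNum := le_cliqueNum_of_not_cliqueFree
    (mt indFree_graphDiamond_of_cliqueFree_three hd)
  obtain hω | hω | hω : G.cliqueNum = 3 ∨ G.cliqueNum = 4 ∨ 5 ≤ G.cliqueNum := by omega
  · exact hasCliqueReducingCover_of_cliqueNum_eq_three h1 hω
  · exact hasCliqueReducingCover_of_cliqueNum_eq_four h1 h2 hω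
  · exact hasCliqueReducingCover_of_five_le_cliqueNum h1 h2 hω

/-- Structure of connected `(2K₂, K₅ - e)`-free graphs. -/
theorem stmt8 {V : Type*} [Fintype V] (G : SimpleGraph V)
    (hconn : G.Connected) (h1 : IndFree graph2K2 G) (h2 : IndFree graphK5e G) :
    (IndFree graph2K2 G ∧ IndFree graphDiamond G) ∨
      ∃ V1 V2 V3 V4 V5 : Set V,
        V1 ∪ V2 ∪ V3 ∪ V4 ∪ V5 = (Set.univ : Set V) ∧
        List.Pairwise Disjoint [V1, V2, V3, V4, V5] ∧
        IndFree graph2K2 (G.induce V1) ∧ IndFree graphDiamond (G.induce V1) ∧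
        (G.induce V1).cliqueNum ≤ G.cliqueNum - 1 ∧
        IsIndep G V2 ∧ IsIndep G V3 ∧ IsIndep G V4 ∧ IsIndep G V5 :=
  stmt8_general G h1 h2
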